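/- arXiv:1004.3320 — 2 statements merged into one kernel-verified Lean document; each statement's English description precedes it below -/
import Mathlib

section
/- In the additively weighted Voronoi diagram of a family of disks, every Voronoi cell is star-shaped with respect to the center of its disk: if x ∈ cell(u), then for every t ∈ [0,1], the point c_u + t·(x - c_u) also lies in cell(u). -/
/-!
If `y` lies on the segment from `c u` to `x`, then `dist x (c u) = dist x y + dist y (c u)`, so
moving from `x` to `y` lowers the weighted distance to `c u` by exactly `dist x y`, while by the
triangle inequality it lowers the weighted distance to any other center by at most `dist x y`.
-/

lemma dist_sub_le_dist_sub_of_dist_add_dist_eq {α : Type*} [PseudoMetricSpace α]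
    {a b x y : α} {ra rb : ℝ} (hy : dist a y + dist y x = dist a x)
    (hx : dist x a - ra ≤ dist x b - rb) : dist y a - ra ≤ dist y b - rb := by
  have htri : dist x b ≤ dist x y + dist y b := dist_triangle x y b
  rw [dist_comm a y, dist_comm a x, dist_comm y x] at hy
  linarith

lemma wbtw_add_smul_sub {E : Type*} [AddCommGroup E] [Module ℝ E] (a x : E) {t : ℝ}
    (ht : t ∈ Set.Icc (0 : ℝ) 1) : Wbtw ℝ a (a + t • (x - a)) x :=
  ⟨t, ht, by rw [AffineMap.lineMap_apply_module', add_comm]⟩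

theorem wvd_cell_starShaped_general {ι : Type*}
    (S : Finset ι) (c : ι → EuclideanSpace ℝ (Fin 2)) (r : ι → ℝ)
    (u : ι)
    (x : EuclideanSpace ℝ (Fin 2))
    (hx : ∀ v ∈ S, dist x (c u) - r u ≤ dist x (c v) - r v) :
    ∀ t : ℝ, t ∈ Set.Icc (0 : ℝ) 1 →
      ∀ v ∈ S,
        dist (c u + t • (x - c u)) (c u) - r u ≤
          dist (c u + t • (x - c u)) (c v) - r v :=
  fun _ ht v hv =>
    dist_sub_le_dist_sub_of_dist_add_dist_eq (wbtw_add_smul_sub (c u) x ht).dist_add_dist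
      (hx v hv)

/-- every cell of the additively weighted Voronoi diagram is
star-shaped with respect to the center of its disk. -/
theorem wvd_cell_starShaped {ι : Type*}
    (S : Finset ι) (c : ι → EuclideanSpace ℝ (Fin 2)) (r : ι → ℝ)
    (u : ι) (hu : u ∈ S)
    (x : EuclideanSpace ℝ (Fin 2))
    (hx : ∀ v ∈ S, dist x (c u) - r u ≤ dist x (c v) - r v) :
    ∀ t : ℝ, t ∈ Set.Icc (0 : ℝ) 1 →
      ∀ v ∈ S,
        dist (c u + t • (x - c u)) (c u) - r u ≤
          dist (c u + t • (x - c u)) (c v) - r v :=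
  wvd_cell_starShaped_general S c r u x hx
end

section
/- Let R and B be two dominating sets of a disk graph on disk set D such that no disk of R ∪ B properly contains another disk of R ∪ B, and assume suitable non-degeneracy. Then for every disk u ∈ D there exist r ∈ R and b ∈ B, both intersecting u, such that the weighted Voronoi cells of r and b in the WVD of R ∪ B share a boundary point (a point x with pow(x,r) = pow(x,b) ≤ pow(x,w) for all w ∈ R ∪ B). -/
/-!
Walk from the center `p` of `u` along the segment to the center `q` of a blue dominator `b`,
assuming (by symmetry) that the smallest red power distance at `p` is at most the smallest blue
one. At `q` the blue minimum is at most `-r b`, which is at most every red power distance since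
no other disk contains `b`; so by the intermediate value theorem the red and blue minima agree
at some `x` on the segment, and the red and blue minimizers `a`, `b'` there have touching cells.
Their power distance at `x` is at most that of `b`, and the triangle inequality through `x` turns
this into `dist p (c a) ≤ dist p q - r b + r a ≤ r u + r a`, and likewise for `b'`.
-/

open Finset

section

variable {ι E : Type*} [PseudoMetricSpace E]

/-- Some point lies in the weighted Voronoi cells of both `a` and `b` in the diagram of `S`. -/
def VoronoiCellsMeet (S : Finset ι) (c : ι → E) (r : ι → ℝ) (a b : ι) : Prop :=
  ∃ x : E, dist x (c a) - r a = dist x (c b) - r b ∧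
    ∀ w ∈ S, dist x (c a) - r a ≤ dist x (c w) - r w

lemma VoronoiCellsMeet.symm {S : Finset ι} {c : ι → E} {r : ι → ℝ} {a b : ι}
    (h : VoronoiCellsMeet S c r a b) : VoronoiCellsMeet S c r b a := by
  obtain ⟨x, hab, hmin⟩ := h
  exact ⟨x, hab.symm, fun w hw => hab ▸ hmin w hw⟩

lemma continuous_inf'_dist_sub (S : Finset ι) (hS : S.Nonempty) (c : ι → E) (r : ι → ℝ) :
    Continuous fun x => S.inf' hS fun s => dist x (c s) - r s :=
  Continuous.finset_inf'_apply hS fun _ _ => (continuous_id.dist continuous_const).sub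
    continuous_const

end

section

variable {E : Type*} [NormedAddCommGroup E] [NormedSpace ℝ E]

lemma dist_le_of_mem_segment_of_sub_le {p q x y : E} {ρ σ : ℝ} (hx : x ∈ segment ℝ p q)
    (h : dist x y - σ ≤ dist x q - ρ) : dist p y ≤ dist p q - ρ + σ := by
  have := dist_add_dist_of_mem_segment hx
  have := dist_triangle p x y
  linarith

variable {ι : Type*} [DecidableEq ι]

lemma exists_voronoiCellsMeet_of_inf'_le {X Y : Finset ι} {c : ι → E} {r : ι → ℝ} {p : E}
    {ρ : ℝ} {b : ι} (hX : X.Nonempty) (hb : b ∈ Y) (hpb : dist p (c b) ≤ ρ + r b)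
    (hbX : ∀ s ∈ X, s ≠ b → ¬ dist (c b) (c s) + r b ≤ r s)
    (hp : (X.inf' hX fun s => dist p (c s) - r s) ≤ Y.inf' ⟨b, hb⟩ fun s => dist p (c s) - r s) :
    ∃ a ∈ X, ∃ b' ∈ Y, dist p (c a) ≤ ρ + r a ∧ dist p (c b') ≤ ρ + r b' ∧
      VoronoiCellsMeet (X ∪ Y) c r a b' := by
  have hY : Y.Nonempty := ⟨b, hb⟩
  have hq : (Y.inf' hY fun s => dist (c b) (c s) - r s) ≤
      X.inf' hX fun s => dist (c b) (c s) - r s := by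
    refine (inf'_le _ hb).trans (le_inf' _ _ fun s hs => ?_)
    rcases eq_or_ne s b with rfl | hsb
    · exact le_rfl
    · linarith [not_le.mp (hbX s hs hsb), dist_self (c b)]
  obtain ⟨x, hx, hxXY⟩ := (convex_segment p (c b)).isPreconnected.intermediate_value₂
    (left_mem_segment ℝ p (c b)) (right_mem_segment ℝ p (c b))
    (continuous_inf'_dist_sub X hX c r).continuousOn
    (continuous_inf'_dist_sub Y hY c r).continuousOn hp hq
  obtain ⟨a, ha, hxa⟩ := exists_mem_eq_inf' hX fun s => dist x (c s) - r s
  obtain ⟨b', hb', hxb'⟩ := exists_mem_eq_inf' hY fun s => dist x (c s) - r s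
  have hmin : ∀ w ∈ X ∪ Y, dist x (c a) - r a ≤ dist x (c w) - r w := by
    intro w hw
    rcases mem_union.mp hw with hw | hw
    · exact hxa ▸ inf'_le _ hw
    · exact hxa ▸ hxXY ▸ inf'_le _ hw
  have hab' : dist x (c a) - r a = dist x (c b') - r b' := by rw [← hxa, ← hxb', hxXY]
  have hdom : ∀ s, dist x (c s) - r s ≤ dist x (c b) - r b → dist p (c s) ≤ ρ + r s :=
    fun s hs => by linarith [dist_le_of_mem_segment_of_sub_le hx hs]
  have hab : dist x (c a) - r a ≤ dist x (c b) - r b := hmin b (mem_union_right _ hb)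
  exact ⟨a, ha, b', hb', hdom a hab, hdom b' (hab' ▸ hab), x, hab', hmin⟩

end

theorem locality_condition_general {ι : Type*} [DecidableEq ι]
    (D R B : Finset ι) (c : ι → EuclideanSpace ℝ (Fin 2)) (r : ι → ℝ)
    (hRdom : ∀ u ∈ D, ∃ s ∈ R, dist (c u) (c s) ≤ r u + r s)
    (hBdom : ∀ u ∈ D, ∃ s ∈ B, dist (c u) (c s) ≤ r u + r s)
    (hnc : ∀ u ∈ R ∪ B, ∀ v ∈ R ∪ B, u ≠ v →
      ¬ (dist (c u) (c v) + r u ≤ r v)) :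
    ∀ u ∈ D, ∃ a ∈ R, ∃ b ∈ B,
      dist (c u) (c a) ≤ r u + r a ∧
      dist (c u) (c b) ≤ r u + r b ∧
      ∃ x : EuclideanSpace ℝ (Fin 2),
        dist x (c a) - r a = dist x (c b) - r b ∧
        ∀ w ∈ R ∪ B, dist x (c a) - r a ≤ dist x (c w) - r w := by
  intro u hu
  obtain ⟨a₀, ha₀, hua₀⟩ := hRdom u hu
  obtain ⟨b₀, hb₀, hub₀⟩ := hBdom u hu
  have hnc' : ∀ v ∈ R ∪ B, ∀ s ∈ R ∪ B, s ≠ v → ¬ dist (c v) (c s) + r v ≤ r s :=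
    fun v hv s hs hsv => hnc v hv s hs hsv.symm
  rcases le_total (R.inf' ⟨a₀, ha₀⟩ fun s => dist (c u) (c s) - r s)
      (B.inf' ⟨b₀, hb₀⟩ fun s => dist (c u) (c s) - r s) with hRB | hBR
  · exact exists_voronoiCellsMeet_of_inf'_le _ hb₀ hub₀
      (fun s hs => hnc' b₀ (mem_union_right _ hb₀) s (mem_union_left _ hs)) hRB
  · obtain ⟨b, hb, a, ha, hub, hua, hcells⟩ := exists_voronoiCellsMeet_of_inf'_le _ ha₀ hua₀
      (fun s hs => hnc' a₀ (mem_union_left _ ha₀) s (mem_union_right _ hs)) hBR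
    exact ⟨a, ha, b, hb, hua, hub, union_comm B R ▸ hcells.symm⟩

/-- locality condition: if `R` and `B` are dominating sets of a
disk graph on `D`, no disk of `R ∪ B` properly contains another disk of
`R ∪ B`, and no three centers of disks of `R ∪ B` are collinear, then every
disk `u ∈ D` has a red dominator `a ∈ R` and a blue dominator `b ∈ B` whose
weighted Voronoi cells in the WVD of `R ∪ B` share a boundary point. -/
theorem locality_condition {ι : Type*} [DecidableEq ι]
    (D R B : Finset ι) (c : ι → EuclideanSpace ℝ (Fin 2)) (r : ι → ℝ)
    (hr : ∀ u ∈ D, 0 < r u)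
    (hR : R ⊆ D) (hB : B ⊆ D)
    (hRdom : ∀ u ∈ D, ∃ s ∈ R, dist (c u) (c s) ≤ r u + r s)
    (hBdom : ∀ u ∈ D, ∃ s ∈ B, dist (c u) (c s) ≤ r u + r s)
    (hnc : ∀ u ∈ R ∪ B, ∀ v ∈ R ∪ B, u ≠ v →
      ¬ (dist (c u) (c v) + r u ≤ r v))
    (hgen : ∀ a ∈ R ∪ B, ∀ b ∈ R ∪ B, ∀ d ∈ R ∪ B,
      a ≠ b → b ≠ d → a ≠ d →
      ¬ Collinear ℝ ({c a, c b, c d} : Set (EuclideanSpace ℝ (Fin 2)))) :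
    ∀ u ∈ D, ∃ a ∈ R, ∃ b ∈ B,
      dist (c u) (c a) ≤ r u + r a ∧
      dist (c u) (c b) ≤ r u + r b ∧
      ∃ x : EuclideanSpace ℝ (Fin 2),
        dist x (c a) - r a = dist x (c b) - r b ∧
        ∀ w ∈ R ∪ B, dist x (c a) - r a ≤ dist x (c w) - r w :=
  locality_condition_general D R B c r hRdom hBdom hnc
end
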